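/- Let s⃗ = (s_1,...,s_{k-1},1) with s_i ≥ 2 and n = s_1+...+s_{k-1}+2, and let P(n,k,s⃗) be the poset of pairs (A,B) of disjoint subsets of [n] each containing an s⃗-stable k-subset. Then P(n,k,s⃗) is the disjoint union of P_1 = {(A,B) : V ⊆ A, U ⊆ B} and P_2 = {(A,B) : U ⊆ A, V ⊆ B}, where U = {1, s_1+1, ..., Σ_{i<k}s_i + 1} and V = {2, s_1+2, ..., Σ_{i<k}s_i + 2}; moreover (V,U) is the minimum element of P_1 and (U,V) is the minimum element of P_2. -/

import Mathlib

/-- The `j`-th smallest element (0-indexed) of a finite set of naturals (default `0`). -/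
def sortedNth (A : Finset ℕ) (j : ℕ) : ℕ := (A.sort (· ≤ ·)).getD j 0

/-- `A` is an `s`-stable `k`-subset of `[n] = {1,…,n}`: writing `A(0) < A(1) < ⋯ < A(k-1)`
for its elements, `A(j+1) - A(j) ≥ s j` for `j + 1 < k`, and `A(k-1) - A(0) ≤ n - s (k-1)`
(formulated additively to avoid truncated subtraction). -/
def VecStable (n k : ℕ) (s : ℕ → ℕ) (A : Finset ℕ) : Prop :=
  A ⊆ Finset.Icc 1 n ∧ A.card = k ∧
    (∀ j, j + 1 < k → sortedNth A j + s j ≤ sortedNth A (j + 1)) ∧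
    sortedNth A (k - 1) + s (k - 1) ≤ sortedNth A 0 + n

/-- The `s`-stable Kneser graph `KG(n,k)_{s-stab}`: vertices are the `s`-stable
`k`-subsets of `[n]`, adjacent iff disjoint. -/
def stableKneser (n k : ℕ) (s : ℕ → ℕ) :
    SimpleGraph {A : Finset ℕ // VecStable n k s A} where
  Adj X Y := X ≠ Y ∧ Disjoint X.1 Y.1
  symm := ⟨fun _ _ h => ⟨h.1.symm, h.2.symm⟩⟩
  loopless := ⟨fun _ h => h.1 rfl⟩

/-- The set `U = {1, s₁+1, s₁+s₂+1, …}` (the `j`-th element is `s₁+⋯+s_j + 1`). -/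
def Uset (k : ℕ) (s : ℕ → ℕ) : Finset ℕ :=
  (Finset.range k).image (fun j => (∑ i ∈ Finset.range j, s i) + 1)

/-- The set `V = {2, s₁+2, s₁+s₂+2, …}`. -/
def Vset (k : ℕ) (s : ℕ → ℕ) : Finset ℕ :=
  (Finset.range k).image (fun j => (∑ i ∈ Finset.range j, s i) + 2)

/-- Membership in the poset `P(n,k,s⃗)`: pairs `(A,B)` of disjoint subsets of `[n]`,
each containing an `s⃗`-stable `k`-subset. -/
def Ppred (n k : ℕ) (s : ℕ → ℕ) (A B : Finset ℕ) : Prop :=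
  A ⊆ Finset.Icc 1 n ∧ B ⊆ Finset.Icc 1 n ∧ Disjoint A B ∧
    (∃ C ⊆ A, VecStable n k s C) ∧ (∃ C ⊆ B, VecStable n k s C)

/-! Write `σ j = s₁ + ⋯ + s_j`. Chaining the gap conditions of a stable `k`-set `C` gives
`C(0) + σ j ≤ C(j)` and `C(j) + (σ (k-1) - σ j) ≤ C(k-1) ≤ n = σ (k-1) + 2`, so every
`C(j)` is `σ j + 1` or `σ j + 2`: `C ⊆ U ∪ V`, and `C = V` as soon as `1 ∉ C`, i.e.
`C(0) = 2`. Of two disjoint stable sets one avoids `1`, so it is `V`, and the other one,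
avoiding `V`, is `U` by counting. -/

open Finset

theorem sortedNth_eq_orderEmbOfFin {C : Finset ℕ} {k j : ℕ} (h : C.card = k) (hj : j < k) :
    sortedNth C j = C.orderEmbOfFin h ⟨j, hj⟩ := by
  subst h
  rw [sortedNth, orderEmbOfFin_apply, List.getD_eq_getElem _ _ (by simpa using hj)]
  rfl

theorem sortedNth_mem {C : Finset ℕ} {j : ℕ} (hj : j < C.card) : sortedNth C j ∈ C := by
  rw [sortedNth_eq_orderEmbOfFin rfl hj]
  exact orderEmbOfFin_mem ..

theorem exists_sortedNth_eq_of_mem {C : Finset ℕ} {x : ℕ} (hx : x ∈ C) :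
    ∃ j < C.card, sortedNth C j = x := by
  have hrange : x ∈ Set.range (C.orderEmbOfFin rfl) := by rwa [range_orderEmbOfFin]
  obtain ⟨⟨j, hj⟩, rfl⟩ := hrange
  exact ⟨j, hj, sortedNth_eq_orderEmbOfFin rfl hj⟩

theorem card_image_range_of_strictMonoOn {k : ℕ} {f : ℕ → ℕ}
    (hf : StrictMonoOn f (Set.Iio k)) : ((range k).image f).card = k := by
  rw [card_image_of_injOn (by simpa using hf.injOn), card_range]

theorem sortedNth_image_range {k : ℕ} {f : ℕ → ℕ} (hf : StrictMonoOn f (Set.Iio k))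
    {j : ℕ} (hj : j < k) : sortedNth ((range k).image f) j = f j := by
  have hcard := card_image_range_of_strictMonoOn hf
  have hunique := orderEmbOfFin_unique hcard (f := fun i : Fin k => f i)
    (fun i => mem_image_of_mem f (mem_range.2 i.2)) (fun a b hab => hf a.2 b.2 hab)
  rw [sortedNth_eq_orderEmbOfFin hcard hj, ← hunique]

def withLastOne (k : ℕ) (s : ℕ → ℕ) : ℕ → ℕ := fun j => if j = k - 1 then 1 else s j

section VecStable

variable {n k : ℕ} {C : Finset ℕ}

theorem VecStable.sortedNth_mem_Icc {t : ℕ → ℕ} (hC : VecStable n k t C) {j : ℕ}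
    (hj : j < k) : sortedNth C j ∈ Icc 1 n :=
  hC.1 (sortedNth_mem (hC.2.1 ▸ hj))

theorem VecStable.sortedNth_add_sum_Ico_le {t : ℕ → ℕ} (hC : VecStable n k t C) {j l : ℕ}
    (hjl : j ≤ l) (hl : l < k) : sortedNth C j + ∑ i ∈ Ico j l, t i ≤ sortedNth C l := by
  induction l, hjl using Nat.le_induction with
  | base => simp
  | succ l hjl ih =>
    have hgap := hC.2.2.1 l hl
    have hprev := ih (by omega)
    rw [sum_Ico_succ_top hjl]
    omega

variable {s : ℕ → ℕ}

theorem sum_Ico_withLastOne {j l : ℕ} (hl : l < k) :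
    ∑ i ∈ Ico j l, withLastOne k s i = ∑ i ∈ Ico j l, s i :=
  sum_congr rfl fun i hi => if_neg (by rw [mem_Ico] at hi; omega)

theorem sum_range_add_two_le (hs : ∀ i, i + 1 < k → 2 ≤ s i) {i j : ℕ} (hij : i < j)
    (hj : j < k) : ∑ x ∈ range i, s x + 2 ≤ ∑ x ∈ range j, s x := by
  have hle := sum_le_sum_of_subset (f := s) (range_subset_range.2 (Nat.succ_le_of_lt hij))
  rw [sum_range_succ] at hle
  have := hs i (by omega)
  omega

theorem strictMonoOn_sum_range_add (hs : ∀ i, i + 1 < k → 2 ≤ s i) (c : ℕ) :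
    StrictMonoOn (fun j => ∑ i ∈ range j, s i + c) (Set.Iio k) := fun i _ j hj hij => by
  have := sum_range_add_two_le hs hij hj
  dsimp only
  omega

theorem card_Uset (hs : ∀ i, i + 1 < k → 2 ≤ s i) : (Uset k s).card = k :=
  card_image_range_of_strictMonoOn (strictMonoOn_sum_range_add hs 1)

theorem card_Vset (hs : ∀ i, i + 1 < k → 2 ≤ s i) : (Vset k s).card = k :=
  card_image_range_of_strictMonoOn (strictMonoOn_sum_range_add hs 2)

theorem disjoint_Uset_Vset (hs : ∀ i, i + 1 < k → 2 ≤ s i) :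
    Disjoint (Uset k s) (Vset k s) := by
  rw [disjoint_left]
  rintro _ hU hV
  obtain ⟨i, hi, rfl⟩ := mem_image.1 hU
  obtain ⟨j, -, hij⟩ := mem_image.1 hV
  rw [mem_range] at hi
  rcases le_or_gt i j with hle | hlt
  · have := sum_le_sum_of_subset (f := s) (range_subset_range.2 hle)
    omega
  · have := sum_range_add_two_le hs hlt hi
    omega

theorem vecStable_image_sum_range_add (hk : 1 ≤ k) (hs : ∀ i, i + 1 < k → 2 ≤ s i)
    (hn : n = ∑ i ∈ range (k - 1), s i + 2) {c : ℕ} (hc₁ : 1 ≤ c) (hc₂ : c ≤ 2) :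
    VecStable n k (withLastOne k s) ((range k).image fun j => ∑ i ∈ range j, s i + c) := by
  have hf := strictMonoOn_sum_range_add hs c
  refine ⟨?_, card_image_range_of_strictMonoOn hf, fun j hj => ?_, ?_⟩
  · intro x hx
    obtain ⟨j, hj, rfl⟩ := mem_image.1 hx
    rw [mem_range] at hj
    have := sum_le_sum_of_subset (f := s) (range_subset_range.2 (by omega : j ≤ k - 1))
    rw [mem_Icc]
    omega
  · rw [sortedNth_image_range hf hj, sortedNth_image_range hf (by omega), withLastOne,
      if_neg (by omega), sum_range_succ]
    omega
  · rw [sortedNth_image_range hf (by omega), sortedNth_image_range hf hk, withLastOne,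
      if_pos rfl, sum_range_zero]
    omega

theorem VecStable.sortedNth_window (hn : n = ∑ i ∈ range (k - 1), s i + 2)
    (hC : VecStable n k (withLastOne k s) C) {j : ℕ} (hj : j < k) :
    sortedNth C 0 + ∑ i ∈ range j, s i ≤ sortedNth C j ∧
      sortedNth C j ≤ ∑ i ∈ range j, s i + 2 := by
  have hlow := hC.sortedNth_add_sum_Ico_le (Nat.zero_le j) hj
  have hhigh := hC.sortedNth_add_sum_Ico_le (by omega : j ≤ k - 1) (by omega)
  have hlast := mem_Icc.1 (hC.sortedNth_mem_Icc (by omega : k - 1 < k))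
  have hsplit := sum_range_add_sum_Ico s (by omega : j ≤ k - 1)
  rw [sum_Ico_withLastOne hj, ← range_eq_Ico] at hlow
  rw [sum_Ico_withLastOne (by omega)] at hhigh
  omega

theorem VecStable.subset_Uset_union_Vset (hn : n = ∑ i ∈ range (k - 1), s i + 2)
    (hC : VecStable n k (withLastOne k s) C) : C ⊆ Uset k s ∪ Vset k s := by
  intro x hx
  obtain ⟨j, hj, rfl⟩ := exists_sortedNth_eq_of_mem hx
  rw [hC.2.1] at hj
  have hfirst := mem_Icc.1 (hC.sortedNth_mem_Icc (by omega : 0 < k))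
  have hwindow := hC.sortedNth_window hn hj
  rcases (by omega : sortedNth C j = ∑ i ∈ range j, s i + 1 ∨
      sortedNth C j = ∑ i ∈ range j, s i + 2) with h | h
  · exact mem_union_left _ (mem_image.2 ⟨j, mem_range.2 hj, h.symm⟩)
  · exact mem_union_right _ (mem_image.2 ⟨j, mem_range.2 hj, h.symm⟩)

theorem VecStable.eq_Vset_of_one_notMem (hn : n = ∑ i ∈ range (k - 1), s i + 2)
    (hs : ∀ i, i + 1 < k → 2 ≤ s i)
    (hC : VecStable n k (withLastOne k s) C) (h1 : 1 ∉ C) : C = Vset k s := by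
  refine eq_of_subset_of_card_le (fun x hx => ?_) (by rw [hC.2.1, card_Vset hs])
  obtain ⟨j, hj, rfl⟩ := exists_sortedNth_eq_of_mem hx
  rw [hC.2.1] at hj
  have hfirst_ne : sortedNth C 0 ≠ 1 := fun h => h1 (h ▸ sortedNth_mem (by rw [hC.2.1]; omega))
  have hfirst := mem_Icc.1 (hC.sortedNth_mem_Icc (by omega : 0 < k))
  have hwindow := hC.sortedNth_window hn hj
  rw [show sortedNth C j = ∑ i ∈ range j, s i + 2 by omega]
  exact mem_image_of_mem _ (mem_range.2 hj)

theorem VecStable.eq_Uset_of_disjoint_Vset (hn : n = ∑ i ∈ range (k - 1), s i + 2)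
    (hs : ∀ i, i + 1 < k → 2 ≤ s i)
    (hC : VecStable n k (withLastOne k s) C) (hCV : Disjoint C (Vset k s)) : C = Uset k s :=
  eq_of_subset_of_card_le
    (fun _ hx => (mem_union.1 (hC.subset_Uset_union_Vset hn hx)).resolve_right
      (disjoint_left.1 hCV hx))
    (by rw [hC.2.1, card_Uset hs])

theorem VecStable.eq_Uset_Vset_of_disjoint (hn : n = ∑ i ∈ range (k - 1), s i + 2)
    (hs : ∀ i, i + 1 < k → 2 ≤ s i) {D : Finset ℕ}
    (hC : VecStable n k (withLastOne k s) C) (hD : VecStable n k (withLastOne k s) D)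
    (hCD : Disjoint C D) :
    (C = Uset k s ∧ D = Vset k s) ∨ (C = Vset k s ∧ D = Uset k s) := by
  by_cases h1 : 1 ∈ C
  · have hDV := hD.eq_Vset_of_one_notMem hn hs (disjoint_left.1 hCD h1)
    exact .inl ⟨hC.eq_Uset_of_disjoint_Vset hn hs (hDV ▸ hCD), hDV⟩
  · have hCV := hC.eq_Vset_of_one_notMem hn hs h1
    exact .inr ⟨hCV, hD.eq_Uset_of_disjoint_Vset hn hs (hCV ▸ hCD.symm)⟩

end VecStable

theorem xor_subset_of_disjoint {α : Type*} {X Y A B : Finset α} (hAB : Disjoint A B)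
    (hX : X.Nonempty) (h : Y ⊆ A ∧ X ⊆ B ∨ X ⊆ A ∧ Y ⊆ B) :
    Xor (X ⊆ A ∧ Y ⊆ B) (Y ⊆ A ∧ X ⊆ B) := by
  have hX_not_both : ¬ (X ⊆ A ∧ X ⊆ B) := fun ⟨hXA, hXB⟩ =>
    hX.ne_empty ((disjoint_self_iff_empty X).1 (hAB.mono hXA hXB))
  rcases h with h | h
  · exact .inr ⟨h, fun h' => hX_not_both ⟨h'.1, h.2⟩⟩
  · exact .inl ⟨h, fun h' => hX_not_both ⟨h.1, h'.2⟩⟩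

/-- for `s⃗ = (s₁,…,s_{k-1},1)` with `sᵢ ≥ 2` and `n = s₁+⋯+s_{k-1}+2`,
the poset `P(n,k,s⃗)` is the disjoint union of `P₁ = {(A,B) : V ⊆ A, U ⊆ B}` and
`P₂ = {(A,B) : U ⊆ A, V ⊆ B}`; moreover `(V,U)` is the minimum of `P₁` and `(U,V)`
the minimum of `P₂`. -/
theorem stmt11 (n k : ℕ) (s : ℕ → ℕ) (hk : 1 ≤ k)
    (hs : ∀ i, i + 1 < k → 2 ≤ s i)
    (hn : n = (∑ i ∈ Finset.range (k - 1), s i) + 2) :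
    Ppred n k (fun j => if j = k - 1 then 1 else s j) (Vset k s) (Uset k s) ∧
    Ppred n k (fun j => if j = k - 1 then 1 else s j) (Uset k s) (Vset k s) ∧
    (∀ A B : Finset ℕ, Ppred n k (fun j => if j = k - 1 then 1 else s j) A B →
      Xor' (Vset k s ⊆ A ∧ Uset k s ⊆ B) (Uset k s ⊆ A ∧ Vset k s ⊆ B)) := by
  have hU : VecStable n k (withLastOne k s) (Uset k s) :=
    vecStable_image_sum_range_add hk hs hn le_rfl one_le_two
  have hV : VecStable n k (withLastOne k s) (Vset k s) :=
    vecStable_image_sum_range_add hk hs hn one_le_two le_rfl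
  have hUV := disjoint_Uset_Vset hs
  refine ⟨⟨hV.1, hU.1, hUV.symm, ⟨_, subset_rfl, hV⟩, ⟨_, subset_rfl, hU⟩⟩,
    ⟨hU.1, hV.1, hUV, ⟨_, subset_rfl, hU⟩, ⟨_, subset_rfl, hV⟩⟩, ?_⟩
  rintro A B ⟨-, -, hAB, ⟨C, hCA, hC⟩, ⟨D, hDB, hD⟩⟩
  have hV_nonempty : (Vset k s).Nonempty := card_pos.1 (by rw [card_Vset hs]; omega)
  refine xor_subset_of_disjoint hAB hV_nonempty ?_
  rcases hC.eq_Uset_Vset_of_disjoint hn hs hD (hAB.mono hCA hDB) with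
    ⟨rfl, rfl⟩ | ⟨rfl, rfl⟩
  · exact .inl ⟨hCA, hDB⟩
  · exact .inr ⟨hCA, hDB⟩
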